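/- arXiv:2307.02373 — 10 statements merged into one kernel-verified Lean document; each statement's English description precedes it below -/
import Mathlib

section
/- For any connected graph G, the strong metric dimension of G equals the vertex cover number of its strong resolving graph G_SR. -/
/-!
A vertex `z` strongly resolving an MMD pair `u, v` must equal `u` or `v`: a geodesic from `v`
through `u` cannot be prolonged past a vertex maximally distant from `v`. So strong resolving
sets are vertex covers of `G_SR`. Conversely, given `x ≠ y`, extend a `y`–`x` geodesic beyond `x`
as far as possible to a vertex `u` maximally distant from `y`, then extend the `u`–`y` geodesic
beyond `y` to a vertex `v` maximally distant from `u`. Then `u, v` is an MMD pair, and whichever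
of them lies in a vertex cover strongly resolves `x, y`.
-/

open SimpleGraph

variable {V : Type*} {W : Type*}

/-- `x` lies on some `y`–`z` geodesic in `G`. -/
def LiesOnGeodesic (G : SimpleGraph V) (x y z : V) : Prop :=
  G.dist y x + G.dist x z = G.dist y z

/-- A strong resolving set of `G`. -/
def IsStrongResolvingSet (G : SimpleGraph V) (S : Set V) : Prop :=
  ∀ x y : V, x ≠ y → ∃ z ∈ S,
    LiesOnGeodesic G x y z ∨ LiesOnGeodesic G y x z

/-- The strong metric dimension of a finite graph. -/
noncomputable def sdim (G : SimpleGraph V) [Fintype V] : ℕ :=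
  sInf {n : ℕ | ∃ S : Finset V, S.card = n ∧ IsStrongResolvingSet G ↑S}

/-- `u` is maximally distant from `v` in `G`. -/
def MaxDistFrom (G : SimpleGraph V) (u v : V) : Prop :=
  ∀ w : V, G.Adj u w → G.dist w v ≤ G.dist u v

/-- `u` and `v` are mutually maximally distant in `G`. -/
def MutMaxDist (G : SimpleGraph V) (u v : V) : Prop :=
  MaxDistFrom G u v ∧ MaxDistFrom G v u

/-- The strong resolving graph of `G` (on the full vertex set; vertices not in
any MMD pair are isolated). -/
def srGraph (G : SimpleGraph V) : SimpleGraph V where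
  Adj u v := u ≠ v ∧ MutMaxDist G u v
  symm := by
    constructor
    rintro u v ⟨h, h1, h2⟩
    exact ⟨h.symm, h2, h1⟩
  loopless := by constructor; rintro v ⟨h, -⟩; exact h rfl

/-- A vertex cover of `H`. -/
def IsVertexCover (H : SimpleGraph V) (C : Set V) : Prop :=
  ∀ u v : V, H.Adj u v → u ∈ C ∨ v ∈ C

/-- The vertex cover number of a finite graph. -/
noncomputable def vcNum (H : SimpleGraph V) [Fintype V] : ℕ :=
  sInf {n : ℕ | ∃ C : Finset V, C.card = n ∧ _root_.IsVertexCover H ↑C}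

section

variable {G : SimpleGraph V} {u v w x y z : V}

theorem SimpleGraph.Connected.exists_adj_dist_add_one_eq (hG : G.Connected) (h : u ≠ z) :
    ∃ w, G.Adj u w ∧ G.dist w z + 1 = G.dist u z := by
  obtain ⟨p, hp⟩ := hG.exists_walk_length_eq_dist u z
  cases p with
  | nil => exact absurd rfl h
  | @cons _ w _ hadj q =>
    refine ⟨w, hadj, ?_⟩
    have h₁ : G.dist w z ≤ q.length := dist_le q
    have h₂ : G.dist u z ≤ G.dist u w + G.dist w z := hG.dist_triangle
    rw [dist_eq_one_iff_adj.mpr hadj] at h₂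
    rw [Walk.length_cons] at hp
    omega

theorem SimpleGraph.Adj.dist_le_dist_add_one (hadj : G.Adj u w) (y : V) :
    G.dist w y ≤ G.dist u y + 1 := by
  have h := hadj.symm.reachable.dist_triangle_left y
  rwa [dist_eq_one_iff_adj.mpr hadj.symm, add_comm] at h

theorem LiesOnGeodesic.self_right (x y : V) : LiesOnGeodesic G x y x := by
  simp [LiesOnGeodesic]

theorem MaxDistFrom.eq_of_liesOnGeodesic (hG : G.Connected) (hm : MaxDistFrom G u v)
    (hl : LiesOnGeodesic G u v z) : z = u := by
  by_contra hne
  obtain ⟨w, hadj, hw⟩ := hG.exists_adj_dist_add_one_eq (Ne.symm hne)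
  have h₁ : G.dist v z ≤ G.dist v w + G.dist w z := hG.dist_triangle
  have h₂ : G.dist w v ≤ G.dist u v := hm w hadj
  rw [dist_comm (u := v) (v := w)] at h₁
  rw [LiesOnGeodesic, dist_comm (u := v) (v := u)] at hl
  omega

theorem MaxDistFrom.of_liesOnGeodesic (hG : G.Connected) (hm : MaxDistFrom G u y)
    (hl : LiesOnGeodesic G y u v) : MaxDistFrom G u v := by
  intro w hadj
  have h₁ : G.dist w v ≤ G.dist w y + G.dist y v := hG.dist_triangle
  have h₂ : G.dist w y ≤ G.dist u y := hm w hadj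
  rw [LiesOnGeodesic] at hl
  omega

theorem LiesOnGeodesic.of_subsegment (hG : G.Connected) (hy : LiesOnGeodesic G y u v)
    (hx : LiesOnGeodesic G x y u) : LiesOnGeodesic G y x v := by
  have h₁ : G.dist x v ≤ G.dist x y + G.dist y v := hG.dist_triangle
  have h₂ : G.dist u v ≤ G.dist u x + G.dist x v := hG.dist_triangle
  rw [LiesOnGeodesic] at hx hy ⊢
  rw [dist_comm (u := u) (v := x), dist_comm (u := y) (v := x)] at *
  rw [dist_comm (u := u) (v := y)] at hy
  omega

/-- Take `u` as far from `y` as possible with `x` on a `y`–`u` geodesic: a neighbour of `u`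
farther from `y` would prolong the geodesic. -/
theorem exists_liesOnGeodesic_maxDistFrom [Finite V] (hG : G.Connected) (x y : V) :
    ∃ u, LiesOnGeodesic G x y u ∧ MaxDistFrom G u y := by
  obtain ⟨u, hu, hmax⟩ := Set.exists_max_image {u | LiesOnGeodesic G x y u} (G.dist · y)
    (Set.toFinite _) ⟨x, LiesOnGeodesic.self_right x y⟩
  refine ⟨u, hu, fun w hadj => ?_⟩
  by_contra! hlt
  have hwy : G.dist w y = G.dist u y + 1 := le_antisymm (hadj.dist_le_dist_add_one y) hlt
  have hw : LiesOnGeodesic G x y w := by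
    have h₁ : G.dist y w ≤ G.dist y x + G.dist x w := hG.dist_triangle
    have h₂ : G.dist x w ≤ G.dist x u + G.dist u w := hG.dist_triangle
    have h₃ : G.dist u w = 1 := dist_eq_one_iff_adj.mpr hadj
    rw [Set.mem_ofPred_eq, LiesOnGeodesic] at hu
    rw [LiesOnGeodesic]
    rw [dist_comm (u := y) (v := w), dist_comm (u := y) (v := u)] at *
    omega
  exact (hmax w hw).not_gt hlt

theorem IsStrongResolvingSet.isVertexCover_srGraph (hG : G.Connected) {S : Set V}
    (hS : IsStrongResolvingSet G S) : _root_.IsVertexCover (srGraph G) S := by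
  rintro u v ⟨huv, hu, hv⟩
  obtain ⟨z, hz, hl | hl⟩ := hS u v huv
  · exact .inl (hu.eq_of_liesOnGeodesic hG hl ▸ hz)
  · exact .inr (hv.eq_of_liesOnGeodesic hG hl ▸ hz)

theorem IsVertexCover.isStrongResolvingSet_of_srGraph [Finite V] (hG : G.Connected) {C : Set V}
    (hC : _root_.IsVertexCover (srGraph G) C) : IsStrongResolvingSet G C := by
  intro x y hxy
  obtain ⟨u, hxu, huy⟩ := exists_liesOnGeodesic_maxDistFrom hG x y
  obtain ⟨v, hyv, hvu⟩ := exists_liesOnGeodesic_maxDistFrom hG y u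
  have huv : u ≠ v := by
    rintro rfl
    obtain rfl : u = y := by
      simpa [LiesOnGeodesic, dist_comm (u := y), hG.dist_eq_zero_iff] using hyv
    simp [LiesOnGeodesic, dist_comm (u := x), hG.dist_eq_zero_iff] at hxu
    exact hxy hxu.symm
  rcases hC u v ⟨huv, huy.of_liesOnGeodesic hG hyv, hvu⟩ with hu | hv
  · exact ⟨u, hu, .inl hxu⟩
  · exact ⟨v, hv, .inr (hyv.of_subsegment hG hxu)⟩

theorem isStrongResolvingSet_iff_isVertexCover_srGraph [Finite V] (hG : G.Connected)
    {S : Set V} : IsStrongResolvingSet G S ↔ _root_.IsVertexCover (srGraph G) S :=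
  ⟨(·.isVertexCover_srGraph hG), (·.isStrongResolvingSet_of_srGraph hG)⟩

end

theorem sdim_eq_vcNum_srGraph [Fintype V] (G : SimpleGraph V) (hG : G.Connected) :
    sdim G = vcNum (srGraph G) := by
  simp only [sdim, vcNum, isStrongResolvingSet_iff_isVertexCover_srGraph hG]
end

section
/- If x and y are mutually maximally distant vertices in a connected graph G, then every strong resolving set S of G satisfies S ∩ {x,y} ≠ ∅. -/
open SimpleGraph

variable {V : Type*} {W : Type*}

/-- If `z ≠ x`, the first step `w` of a shortest `x`–`z` walk would give
`d(y, z) ≤ d(y, w) + d(w, z) < d(y, x) + d(x, z)`. -/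
theorem MaxDistFrom.eq_of_liesOnGeodesic_s1 {G : SimpleGraph V} {x y z : V}
    (hmax : MaxDistFrom G x y) (hxz : G.Reachable x z) (hgeo : LiesOnGeodesic G x y z) :
    z = x := by
  by_contra hzx
  obtain ⟨p, hp⟩ := hxz.exists_walk_length_eq_dist
  cases p with
  | nil => exact hzx rfl
  | @cons _ w _ hxw q =>
    have hwz : G.dist w z ≤ q.length := dist_le q
    have hyw : G.dist y w ≤ G.dist y x := by
      rw [dist_comm, dist_comm (u := y)]
      exact hmax w hxw
    have htri : G.dist y z ≤ G.dist y w + G.dist w z := q.reachable.dist_triangle_right y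
    rw [Walk.length_cons] at hp
    unfold LiesOnGeodesic at hgeo
    omega

theorem strongResolvingSet_inter_mmd_pair_general (G : SimpleGraph V)
    (hG : G.Connected) (x y : V) (hxy : x ≠ y) (hmmd : MutMaxDist G x y)
    (S : Set V) (hS : IsStrongResolvingSet G S) :
    x ∈ S ∨ y ∈ S := by
  obtain ⟨z, hzS, hx | hy⟩ := hS x y hxy
  · exact .inl (hmmd.1.eq_of_liesOnGeodesic_s1 (hG.preconnected x z) hx ▸ hzS)
  · exact .inr (hmmd.2.eq_of_liesOnGeodesic_s1 (hG.preconnected y z) hy ▸ hzS)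

theorem strongResolvingSet_inter_mmd_pair [Fintype V] (G : SimpleGraph V)
    (hG : G.Connected) (x y : V) (hxy : x ≠ y) (hmmd : MutMaxDist G x y)
    (S : Set V) (hS : IsStrongResolvingSet G S) :
    x ∈ S ∨ y ∈ S :=
  strongResolvingSet_inter_mmd_pair_general G hG x y hxy hmmd S hS
end

section
/- If u and w are distinct vertices of a connected graph G lying in the same twin equivalence class (i.e., N(u) \ {w} = N(w) \ {u}), then every strong resolving set S of G satisfies S ∩ {u,w} ≠ ∅. -/
open SimpleGraph

variable {V : Type*} {W : Type*}

/-!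
Twins are at the same distance from every other vertex: a shortest walk from one twin
leaves through a common neighbour or through the other twin. Hence no third vertex `z` has
one twin on a geodesic from the other to `z`, so a strong resolving set must contain a twin
itself to separate them.
-/

namespace SimpleGraph

variable {G : SimpleGraph V} {u w x : V}

theorem dist_le_dist_of_neighborSet_diff_subset
    (hN : G.neighborSet u \ {w} ⊆ G.neighborSet w) (hux : G.Reachable u x) (hxu : x ≠ u) :
    G.dist w x ≤ G.dist u x := by
  obtain ⟨p, hp⟩ := hux.exists_walk_length_eq_dist
  cases p with
  | nil => exact absurd rfl hxu
  | @cons _ y _ hadj q =>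
    rw [← hp, Walk.length_cons]
    by_cases hyw : y = w
    · subst hyw
      exact (dist_le q).trans (Nat.le_succ _)
    · have hwy : G.Adj w y := hN ⟨hadj, hyw⟩
      exact dist_le (Walk.cons hwy q)

theorem Connected.dist_eq_dist_of_neighborSet_diff_eq (hG : G.Connected)
    (htwin : G.neighborSet u \ {w} = G.neighborSet w \ {u}) (hxu : x ≠ u) (hxw : x ≠ w) :
    G.dist u x = G.dist w x :=
  le_antisymm
    (dist_le_dist_of_neighborSet_diff_subset (htwin ▸ Set.sdiff_subset) (hG w x) hxw)
    (dist_le_dist_of_neighborSet_diff_subset (htwin ▸ Set.sdiff_subset) (hG u x) hxu)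

end SimpleGraph

theorem LiesOnGeodesic.dist_eq_zero {G : SimpleGraph V} {x y z : V}
    (h : LiesOnGeodesic G x y z) (hxy : G.dist x z = G.dist y z) : G.dist y x = 0 := by
  unfold LiesOnGeodesic at h
  omega

theorem strongResolvingSet_inter_twins_general (G : SimpleGraph V)
    (hG : G.Connected) (u w : V) (huw : u ≠ w)
    (htwin : G.neighborSet u \ {w} = G.neighborSet w \ {u})
    (S : Set V) (hS : IsStrongResolvingSet G S) :
    u ∈ S ∨ w ∈ S := by
  obtain ⟨z, hzS, hgeo⟩ := hS u w huw
  by_contra! hnot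
  have hzu : z ≠ u := by rintro rfl; exact hnot.1 hzS
  have hzw : z ≠ w := by rintro rfl; exact hnot.2 hzS
  have hd := hG.dist_eq_dist_of_neighborSet_diff_eq htwin hzu hzw
  rcases hgeo with hgeo | hgeo
  · exact huw (hG.dist_eq_zero_iff.mp (hgeo.dist_eq_zero hd)).symm
  · exact huw (hG.dist_eq_zero_iff.mp (hgeo.dist_eq_zero hd.symm))

theorem strongResolvingSet_inter_twins [Fintype V] (G : SimpleGraph V)
    (hG : G.Connected) (u w : V) (huw : u ≠ w)
    (htwin : G.neighborSet u \ {w} = G.neighborSet w \ {u})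
    (S : Set V) (hS : IsStrongResolvingSet G S) :
    u ∈ S ∨ w ∈ S :=
  strongResolvingSet_inter_twins_general G hG u w huw htwin S hS
end

section
/- For a connected graph G on n ≥ 2 vertices, sdim(G) = 1 if and only if G is a path. -/
open SimpleGraph

variable {V : Type*} {W : Type*}

/-! A single vertex `w` strongly resolves `G` exactly when `d(x, y) = |d(x, w) - d(y, w)|` for all
`x, y`. In a connected graph on `n` vertices this makes `x ↦ d(x, w)` an injection, hence a
bijection, into `{0, …, n - 1}` under which adjacency (distance `1`) becomes consecutiveness of the
values: `G` is the path `Pₙ`. Conversely an end vertex of `Pₙ` strongly resolves it. Once there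
are two vertices the empty set resolves nothing, so `sdim G = 1` says exactly that some singleton
strongly resolves `G`. -/

namespace SimpleGraph

variable {G : SimpleGraph V} {H : SimpleGraph W}

theorem Iso.dist_eq (e : G ≃g H) (u v : V) : H.dist (e u) (e v) = G.dist u v := by
  by_cases hr : G.Reachable u v
  · apply le_antisymm
    · obtain ⟨p, hp⟩ := hr.exists_walk_length_eq_dist
      simpa [hp] using dist_le (p.map e.toHom)
    · have hr' : H.Reachable (e u) (e v) := Iso.reachable_iff.2 hr
      obtain ⟨p, hp⟩ := hr'.exists_walk_length_eq_dist
      simpa [hp] using dist_le (p.map e.symm.toHom)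
  · rw [dist_eq_zero_of_not_reachable hr,
      dist_eq_zero_of_not_reachable (mt Iso.reachable_iff.1 hr)]

theorem dist_lt_card [Fintype V] (G : SimpleGraph V) (u v : V) : G.dist u v < Fintype.card V := by
  by_cases hr : G.Reachable u v
  · obtain ⟨p, hp, hlen⟩ := hr.exists_path_of_dist
    exact hlen ▸ hp.length_lt
  · rw [dist_eq_zero_of_not_reachable hr]
    exact Fintype.card_pos_iff.2 ⟨u⟩

theorem Walk.abs_sub_le_length (f : V → ℤ) (hf : ∀ ⦃x y⦄, G.Adj x y → |f x - f y| ≤ 1)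
    {u v : V} (p : G.Walk u v) : |f u - f v| ≤ p.length := by
  induction p with
  | nil => simp
  | @cons a b c h p ih =>
    rw [length_cons, Nat.cast_succ]
    linarith [abs_sub_le (f a) (f b) (f c), hf h]

theorem pathGraph_dist_le {n : ℕ} (k : ℕ) {i j : Fin n} (h : j.val = i.val + k) :
    (pathGraph n).dist i j ≤ k := by
  induction k generalizing j with
  | zero => simp [Fin.ext (h.trans i.val.add_zero)]
  | succ k ih =>
    let j' : Fin n := ⟨i.val + k, by omega⟩
    have hadj : (pathGraph n).Adj j' j := pathGraph_adj.2 (.inl (by simp [j', h]; omega))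
    calc (pathGraph n).dist i j ≤ (pathGraph n).dist i j' + (pathGraph n).dist j' j :=
          (pathGraph_preconnected n i j').dist_triangle_left j
      _ ≤ k + 1 := add_le_add (ih rfl) (dist_eq_one_iff_adj.2 hadj).le

theorem pathGraph_dist {n : ℕ} (i j : Fin n) :
    ((pathGraph n).dist i j : ℤ) = |(i : ℤ) - j| := by
  apply le_antisymm
  · rcases le_total i j with hij | hij
    · rw [abs_sub_comm, abs_of_nonneg (by simpa using hij)]
      have := pathGraph_dist_le (j.val - i.val) (i := i) (j := j) (by omega)
      omega
    · rw [abs_of_nonneg (by simpa using hij), dist_comm]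
      have := pathGraph_dist_le (i.val - j.val) (i := j) (j := i) (by omega)
      omega
  · obtain ⟨p, hp⟩ := (pathGraph_preconnected n i j).exists_walk_length_eq_dist
    rw [← hp]
    refine p.abs_sub_le_length (fun x : Fin n ↦ (x : ℤ)) fun x y hxy ↦ ?_
    rw [pathGraph_adj] at hxy
    rw [abs_le]
    omega

end SimpleGraph

section StrongResolving

variable {G : SimpleGraph V} {H : SimpleGraph W}

theorem SimpleGraph.Iso.liesOnGeodesic_iff (e : G ≃g H) {x y z : V} :
    LiesOnGeodesic H (e x) (e y) (e z) ↔ LiesOnGeodesic G x y z := by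
  simp only [LiesOnGeodesic, e.dist_eq]

theorem IsStrongResolvingSet.image_iso {S : Set V} (hS : IsStrongResolvingSet G S) (e : G ≃g H) :
    IsStrongResolvingSet H (e '' S) := by
  intro x y hxy
  obtain ⟨z, hz, hgeo⟩ := hS (e.symm x) (e.symm y) (by simpa using hxy)
  refine ⟨e z, Set.mem_image_of_mem e hz, ?_⟩
  simpa only [← e.liesOnGeodesic_iff, RelIso.apply_symm_apply] using hgeo

theorem not_isStrongResolvingSet_empty [Nontrivial V] : ¬ IsStrongResolvingSet G ∅ := fun h ↦ by
  obtain ⟨x, y, hxy⟩ := exists_pair_ne V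
  obtain ⟨z, hz, -⟩ := h x y hxy
  exact hz

theorem sdim_eq_one_iff [Fintype V] [Nontrivial V] :
    sdim G = 1 ↔ ∃ w, IsStrongResolvingSet G {w} := by
  set A := {n : ℕ | ∃ S : Finset V, S.card = n ∧ IsStrongResolvingSet G ↑S}
  have h0 : 0 ∉ A := by
    rintro ⟨S, hS, hres⟩
    rw [Finset.card_eq_zero.1 hS, Finset.coe_empty] at hres
    exact not_isStrongResolvingSet_empty hres
  have h1 : 1 ∈ A ↔ ∃ w, IsStrongResolvingSet G {w} := by
    simp [A, Finset.card_eq_one]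
  rw [← h1, sdim]
  refine ⟨fun h ↦ h ▸ Nat.sInf_mem (Nat.nonempty_of_sInf_eq_succ h), fun h ↦ ?_⟩
  refine le_antisymm (Nat.sInf_le h) (Nat.pos_of_ne_zero fun h' ↦ ?_)
  exact h0 (h' ▸ Nat.sInf_mem ⟨1, h⟩)

theorem liesOnGeodesic_or_liesOnGeodesic_iff {x y z : V} :
    LiesOnGeodesic G x y z ∨ LiesOnGeodesic G y x z ↔
      (G.dist x y : ℤ) = |(G.dist x z : ℤ) - G.dist y z| := by
  rw [LiesOnGeodesic, LiesOnGeodesic, dist_comm (u := y) (v := x)]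
  rcases abs_cases ((G.dist x z : ℤ) - G.dist y z) with ⟨habs, hsign⟩ | ⟨habs, hsign⟩ <;>
    rw [habs] <;> omega

theorem isStrongResolvingSet_singleton_iff {w : V} :
    IsStrongResolvingSet G {w} ↔ ∀ x y, (G.dist x y : ℤ) = |(G.dist x w : ℤ) - G.dist y w| := by
  simp only [IsStrongResolvingSet, Set.mem_singleton_iff, exists_eq_left,
    liesOnGeodesic_or_liesOnGeodesic_iff]
  refine ⟨fun h x y ↦ ?_, fun h x y _ ↦ h x y⟩
  rcases eq_or_ne x y with rfl | hxy
  · simp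
  · exact h x y hxy

end StrongResolving

theorem isStrongResolvingSet_pathGraph_zero {n : ℕ} (hn : 0 < n) :
    IsStrongResolvingSet (pathGraph n) {⟨0, hn⟩} := by
  simp only [isStrongResolvingSet_singleton_iff, pathGraph_dist]
  intro i j
  simp

theorem SimpleGraph.Connected.nonempty_iso_pathGraph_of_dist_eq [Fintype V] {G : SimpleGraph V}
    (hG : G.Connected) {w : V} (h : ∀ x y, (G.dist x y : ℤ) = |(G.dist x w : ℤ) - G.dist y w|) :
    Nonempty (G ≃g pathGraph (Fintype.card V)) := by
  let f : V → Fin (Fintype.card V) := fun x ↦ ⟨G.dist x w, G.dist_lt_card x w⟩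
  have hf : Function.Injective f := by
    intro x y hxy
    have hdist : G.dist x w = G.dist y w := congrArg Fin.val hxy
    rw [← hG.dist_eq_zero_iff, ← Int.natCast_eq_zero, h, hdist, sub_self, abs_zero]
  refine ⟨⟨Equiv.ofBijective f ((Fintype.bijective_iff_injective_and_card f).2 ⟨hf, by simp⟩), ?_⟩⟩
  intro x y
  change (pathGraph _).Adj (f x) (f y) ↔ _
  have hxy := h x y
  rw [pathGraph_adj, ← dist_eq_one_iff_adj]
  simp only [f]
  rcases abs_cases ((G.dist x w : ℤ) - G.dist y w) with ⟨habs, hsign⟩ | ⟨habs, hsign⟩ <;> omega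

theorem sdim_eq_one_iff_path [Fintype V] (G : SimpleGraph V) (hG : G.Connected)
    (hn : 2 ≤ Fintype.card V) :
    sdim G = 1 ↔ Nonempty (G ≃g pathGraph (Fintype.card V)) := by
  have : Nontrivial V := Fintype.one_lt_card_iff_nontrivial.1 hn
  rw [sdim_eq_one_iff]
  constructor
  · rintro ⟨w, hw⟩
    exact hG.nonempty_iso_pathGraph_of_dist_eq (isStrongResolvingSet_singleton_iff.1 hw)
  · rintro ⟨e⟩
    refine ⟨e.symm ⟨0, by omega⟩, ?_⟩
    simpa using (isStrongResolvingSet_pathGraph_zero (by omega)).image_iso e.symm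
end

section
/- For a connected graph G on n ≥ 2 vertices, sdim(G) = n−1 if and only if G is the complete graph K_n. -/
open SimpleGraph

variable {V : Type*} {W : Type*}

/-! A set `S` strongly resolves every pair that meets it, so only pairs outside `S` matter; in
particular the complement of one vertex is always a strong resolving set and `sdim G ≤ n - 1`.
In `K_n` all distances between distinct vertices are `1`, so no third vertex lies on a geodesic
through two others and a strong resolving set misses at most one vertex. If a connected `G` is
not complete, a shortest path between two non-adjacent vertices begins with `u - w - v` where
`d(u, v) = 2`; then `v` resolves the pair `u, w`, so the complement of `{u, w}` is a strong
resolving set and `sdim G ≤ n - 2`. -/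

section

variable {G : SimpleGraph V}

lemma liesOnGeodesic_right (G : SimpleGraph V) (x y : V) : LiesOnGeodesic G x y x := by
  simp [LiesOnGeodesic]

lemma liesOnGeodesic_top_iff {x y z : V} :
    LiesOnGeodesic (⊤ : SimpleGraph V) x y z ↔ y = x ∨ x = z := by
  classical
  simp only [LiesOnGeodesic, dist_top]
  split_ifs <;> grind

lemma isStrongResolvingSet_iff_forall_notMem {S : Set V} :
    IsStrongResolvingSet G S ↔ ∀ x y, x ∉ S → y ∉ S → x ≠ y →
      ∃ z ∈ S, LiesOnGeodesic G x y z ∨ LiesOnGeodesic G y x z := by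
  refine ⟨fun h x y _ _ => h x y, fun h x y hxy => ?_⟩
  by_cases hx : x ∈ S
  · exact ⟨x, hx, .inl (liesOnGeodesic_right G x y)⟩
  by_cases hy : y ∈ S
  · exact ⟨y, hy, .inr (liesOnGeodesic_right G y x)⟩
  exact h x y hx hy hxy

lemma isStrongResolvingSet_univ (G : SimpleGraph V) : IsStrongResolvingSet G Set.univ :=
  isStrongResolvingSet_iff_forall_notMem.2 fun x _ hx => absurd (Set.mem_univ x) hx

lemma isStrongResolvingSet_compl_singleton (G : SimpleGraph V) (a : V) :
    IsStrongResolvingSet G {a}ᶜ :=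
  isStrongResolvingSet_iff_forall_notMem.2 fun x y hx hy hxy => by
    simp only [Set.mem_compl_iff, Set.mem_singleton_iff, not_not] at hx hy
    exact absurd (hx.trans hy.symm) hxy

lemma IsStrongResolvingSet.subsingleton_compl_of_top {S : Set V}
    (hS : IsStrongResolvingSet (⊤ : SimpleGraph V) S) : Sᶜ.Subsingleton := by
  intro x hx y hy
  by_contra hxy
  obtain ⟨z, hz, hxyz⟩ := isStrongResolvingSet_iff_forall_notMem.1 hS x y hx hy hxy
  simp only [liesOnGeodesic_top_iff] at hxyz
  rcases hxyz with (h | rfl) | (h | rfl)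
  exacts [hxy h.symm, hx hz, hxy h, hy hz]

lemma isStrongResolvingSet_compl_pair {u w v : V} (huw : G.Adj u w) (hwv : G.Adj w v)
    (huv : G.dist u v = 2) : IsStrongResolvingSet G {u, w}ᶜ := by
  have hv : v ∉ ({u, w} : Set V) := by
    rintro (rfl | rfl)
    · simp at huv
    · exact hwv.ne rfl
  have hgeod : LiesOnGeodesic G w u v := by
    rw [LiesOnGeodesic, dist_eq_one_iff_adj.2 huw, dist_eq_one_iff_adj.2 hwv, huv]
  refine isStrongResolvingSet_iff_forall_notMem.2 fun x y hx hy hxy => ⟨v, hv, ?_⟩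
  simp only [Set.mem_compl_iff, not_not, Set.mem_insert_iff, Set.mem_singleton_iff] at hx hy
  rcases hx with rfl | rfl <;> rcases hy with rfl | rfl
  exacts [absurd rfl hxy, .inr hgeod, .inl hgeod, absurd rfl hxy]

lemma SimpleGraph.Connected.exists_adj_adj_dist_eq_two (hG : G.Connected) (hne : G ≠ ⊤) :
    ∃ u w v, G.Adj u w ∧ G.Adj w v ∧ G.dist u v = 2 := by
  obtain ⟨a, b, hab, hnadj⟩ : ∃ a b, a ≠ b ∧ ¬G.Adj a b := by
    by_contra! h
    exact hne (eq_top_iff.2 fun a b hab => h a b hab)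
  obtain ⟨p, hp⟩ := hG.exists_walk_length_eq_dist a b
  obtain ⟨u, w, v, huw, hwv, huv_not_adj, huv_ne⟩ :=
    p.exists_adj_adj_not_adj_ne hp (hG.one_lt_dist_of_ne_of_not_adj hab hnadj)
  refine ⟨u, w, v, huw, hwv, le_antisymm ?_ ?_⟩
  · simpa using dist_le (.cons huw (.cons hwv .nil))
  · exact hG.one_lt_dist_of_ne_of_not_adj huv_ne huv_not_adj

variable [Fintype V]

lemma sdim_le_card {S : Finset V} (hS : IsStrongResolvingSet G S) : sdim G ≤ S.card :=
  Nat.sInf_le ⟨S, rfl, hS⟩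

lemma exists_isStrongResolvingSet_card_eq_sdim (G : SimpleGraph V) :
    ∃ S : Finset V, S.card = sdim G ∧ IsStrongResolvingSet G S :=
  Nat.sInf_mem (s := {n | ∃ S : Finset V, S.card = n ∧ IsStrongResolvingSet G S})
    ⟨_, Finset.univ, rfl, by simpa using isStrongResolvingSet_univ G⟩

lemma sdim_le_card_sub_one (G : SimpleGraph V) : sdim G ≤ Fintype.card V - 1 := by
  classical
  rcases isEmpty_or_nonempty V with _ | ⟨⟨a⟩⟩
  · have h := sdim_le_card (S := Finset.univ) (by simpa using isStrongResolvingSet_univ G)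
    rw [Finset.card_univ, Fintype.card_eq_zero] at h
    exact h.trans (Nat.zero_le _)
  · simpa [Finset.card_compl] using
      sdim_le_card (S := {a}ᶜ) (by simpa using isStrongResolvingSet_compl_singleton G a)

lemma sdim_top : sdim (⊤ : SimpleGraph V) = Fintype.card V - 1 := by
  classical
  refine le_antisymm (sdim_le_card_sub_one ⊤) ?_
  obtain ⟨S, hcard, hS⟩ := exists_isStrongResolvingSet_card_eq_sdim (⊤ : SimpleGraph V)
  have hcompl : Sᶜ.card ≤ 1 :=
    Finset.card_le_one.2 fun x hx y hy =>
      hS.subsingleton_compl_of_top (by simpa using hx) (by simpa using hy)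
  rw [Finset.card_compl] at hcompl
  omega

lemma SimpleGraph.Connected.sdim_lt_card_sub_one (hG : G.Connected) (hne : G ≠ ⊤) :
    sdim G < Fintype.card V - 1 := by
  classical
  obtain ⟨u, w, v, huw, hwv, huv⟩ := hG.exists_adj_adj_dist_eq_two hne
  have hpair : ({u, w} : Finset V).card = 2 := Finset.card_pair huw.ne
  have hle := sdim_le_card (S := {u, w}ᶜ) (by
    simpa only [Finset.coe_compl, Finset.coe_pair] using
      isStrongResolvingSet_compl_pair huw hwv huv)
  have := Finset.card_le_univ ({u, w} : Finset V)
  rw [Finset.card_compl, hpair] at hle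
  omega

end

theorem sdim_eq_card_sub_one_iff_complete_general [Fintype V] (G : SimpleGraph V)
    (hG : G.Connected) :
    sdim G = Fintype.card V - 1 ↔ G = (⊤ : SimpleGraph V) :=
  ⟨fun h => by_contra fun hne => (hG.sdim_lt_card_sub_one hne).ne h, fun h => h ▸ sdim_top⟩

theorem sdim_eq_card_sub_one_iff_complete [Fintype V] (G : SimpleGraph V)
    (hG : G.Connected) (hn : 2 ≤ Fintype.card V) :
    sdim G = Fintype.card V - 1 ↔ G = (⊤ : SimpleGraph V) :=
  sdim_eq_card_sub_one_iff_complete_general G hG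
end

section
/- Let G = K_{a_1,...,a_k} be a complete k-partite graph (k ≥ 2) of order n = Σ a_i ≥ 3, and let s be the number of singleton parts. Then sdim(G) = n − k if s = 0, and sdim(G) = n − k + s − 1 if s ≥ 1. -/
open SimpleGraph

variable {V : Type*} {W : Type*}

/-!
In a complete multipartite graph with at least two nonempty parts, distinct vertices are at
distance 1 when they lie in different parts and at distance 2 when they lie in the same part.
Hence, for `x ≠ y`, a vertex `z ≠ x` sees `x` on a `y`–`z` geodesic exactly when `x` and `y` lie in
different parts and `z ≠ y` lies in the part of `y`. So `S` is strong resolving iff its complement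
meets every part at most once and, of any two of its vertices, the part of one meets `S`; that is,
at most one vertex of the complement is a whole (singleton) part. A largest such complement takes
one vertex from every part of size at least two and from one singleton part, if there is one.
-/

theorem Sigma.eq_of_fst_eq_of_card_eq_one {ι : Type*} {V : ι → Type*} [∀ i, Fintype (V i)]
    {x z : Σ i, V i} (h : z.1 = x.1) (hx : Fintype.card (V x.1) = 1) : z = x := by
  obtain ⟨i, u⟩ := x
  obtain ⟨j, v⟩ := z
  obtain rfl : j = i := h
  congr
  exact Fintype.card_le_one_iff.mp hx.le v u

namespace SimpleGraph.completeMultipartiteGraph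

open Finset

variable {ι : Type*} {V : ι → Type*}

theorem dist_of_fst_ne {x y : Σ i, V i} (h : x.1 ≠ y.1) :
    (completeMultipartiteGraph V).dist x y = 1 :=
  dist_eq_one_iff_adj.mpr h

variable [Nontrivial ι] [∀ i, Nonempty (V i)]

theorem dist_of_fst_eq {x y : Σ i, V i} (hxy : x ≠ y) (h : x.1 = y.1) :
    (completeMultipartiteGraph V).dist x y = 2 := by
  obtain ⟨j, hj⟩ := exists_ne x.1
  let w : Σ i, V i := ⟨j, Classical.arbitrary _⟩
  have hxw : (completeMultipartiteGraph V).Adj x w := Ne.symm hj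
  have hwy : (completeMultipartiteGraph V).Adj w y := fun e => hj (e.trans h.symm)
  have hle : (completeMultipartiteGraph V).dist x y ≤ 2 := dist_le (.cons hxw (.cons hwy .nil))
  have hne : (completeMultipartiteGraph V).dist x y ≠ 1 := fun h1 => dist_eq_one_iff_adj.mp h1 h
  have hpos := (hxw.reachable.trans hwy.reachable).pos_dist_of_ne hxy
  omega

open Classical in
theorem dist_eq (x y : Σ i, V i) :
    (completeMultipartiteGraph V).dist x y = if x = y then 0 else if x.1 = y.1 then 2 else 1 := by
  split_ifs with hxy h
  · simp [hxy]
  · exact dist_of_fst_eq hxy h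
  · exact dist_of_fst_ne h

theorem liesOnGeodesic_iff {x y z : Σ i, V i} (hxy : x ≠ y) :
    LiesOnGeodesic (completeMultipartiteGraph V) x y z ↔
      z = x ∨ z ≠ y ∧ z.1 = y.1 ∧ x.1 ≠ y.1 := by
  unfold LiesOnGeodesic
  simp only [dist_eq]
  split_ifs <;> grind

theorem isStrongResolvingSet_iff {S : Set (Σ i, V i)} :
    IsStrongResolvingSet (completeMultipartiteGraph V) S ↔
      ∀ x ∉ S, ∀ y ∉ S, x ≠ y → x.1 ≠ y.1 ∧ ((∃ z ∈ S, z.1 = x.1) ∨ ∃ z ∈ S, z.1 = y.1) := by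
  constructor
  · intro hS x hx y hy hxy
    obtain ⟨z, hzS, hz⟩ := hS x y hxy
    rw [liesOnGeodesic_iff hxy, liesOnGeodesic_iff hxy.symm] at hz
    rcases hz with hz | hz
    · obtain ⟨-, hzy, hxy⟩ := hz.resolve_left (ne_of_mem_of_not_mem hzS hx)
      exact ⟨hxy, .inr ⟨z, hzS, hzy⟩⟩
    · obtain ⟨-, hzx, hyx⟩ := hz.resolve_left (ne_of_mem_of_not_mem hzS hy)
      exact ⟨hyx.symm, .inl ⟨z, hzS, hzx⟩⟩
  · intro h x y hxy
    by_cases hx : x ∈ S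
    · exact ⟨x, hx, .inl ((liesOnGeodesic_iff hxy).mpr (.inl rfl))⟩
    by_cases hy : y ∈ S
    · exact ⟨y, hy, .inr ((liesOnGeodesic_iff hxy.symm).mpr (.inl rfl))⟩
    obtain ⟨hfst, ⟨z, hzS, hzx⟩ | ⟨z, hzS, hzy⟩⟩ := h x hx y hy hxy
    · exact ⟨z, hzS, .inr ((liesOnGeodesic_iff hxy.symm).mpr
        (.inr ⟨ne_of_mem_of_not_mem hzS hx, hzx, hfst.symm⟩))⟩
    · exact ⟨z, hzS, .inl ((liesOnGeodesic_iff hxy).mpr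
        (.inr ⟨ne_of_mem_of_not_mem hzS hy, hzy, hfst⟩))⟩

theorem card_compl_add_le_of_isStrongResolvingSet [Fintype ι] [∀ i, Fintype (V i)]
    [DecidableEq (Σ i, V i)] {S : Finset (Σ i, V i)}
    (hS : IsStrongResolvingSet (completeMultipartiteGraph V) S) :
    #Sᶜ + (#{i | Fintype.card (V i) = 1} - 1) ≤ Fintype.card ι := by
  classical
  rw [isStrongResolvingSet_iff] at hS
  set P : Finset ι := {i | Fintype.card (V i) = 1}
  set T := Sᶜ.image Sigma.fst
  have hT : #T = #Sᶜ := card_image_of_injOn fun x hx y hy hfst => by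
    by_contra hxy
    exact (hS x (by simpa using hx) y (by simpa using hy) hxy).1 hfst
  have hTP : #(T ∩ P) ≤ 1 := by
    refine card_le_one.mpr fun i hi j hj => ?_
    simp only [T, P, mem_inter, mem_image, mem_filter, mem_univ, true_and, mem_compl] at hi hj
    obtain ⟨⟨x, hx, rfl⟩, hxP⟩ := hi
    obtain ⟨⟨y, hy, rfl⟩, hyP⟩ := hj
    by_contra hfst
    obtain ⟨-, ⟨z, hzS, hzx⟩ | ⟨z, hzS, hzy⟩⟩ :=
      hS x (by simpa using hx) y (by simpa using hy) (fun e => hfst (congrArg _ e))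
    · exact hx (Sigma.eq_of_fst_eq_of_card_eq_one hzx hxP ▸ hzS)
    · exact hy (Sigma.eq_of_fst_eq_of_card_eq_one hzy hyP ▸ hzS)
  have hsplit : #(T \ P) + #(T ∩ P) = #T := card_sdiff_add_card_inter T P
  have hTnP : #(T \ P) ≤ #Pᶜ := card_le_card fun i hi => mem_compl.mpr (mem_sdiff.mp hi).2
  have hPc : #Pᶜ = Fintype.card ι - #P := card_compl P
  have hTPP : #(T ∩ P) ≤ #P := card_le_card inter_subset_right
  have hP : #P ≤ Fintype.card ι := card_le_univ P
  omega

theorem isStrongResolvingSet_compl_image [∀ i, Fintype (V i)] (f : ∀ i, V i) {I : Set ι}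
    (hI : {i ∈ I | Fintype.card (V i) = 1}.Subsingleton) :
    IsStrongResolvingSet (completeMultipartiteGraph V) ((fun i => ⟨i, f i⟩) '' I)ᶜ := by
  have hf : ∀ i (v : V i), (⟨i, v⟩ : Σ i, V i) ∈ (fun i => ⟨i, f i⟩) '' I → v = f i := by
    rintro i v ⟨j, -, hj⟩
    obtain ⟨rfl, h⟩ := Sigma.mk.inj_iff.mp hj
    exact (eq_of_heq h).symm
  have hpart : ∀ i, Fintype.card (V i) ≠ 1 →
      ∃ z ∈ ((fun i => ⟨i, f i⟩) '' I)ᶜ, (z : Σ i, V i).1 = i := by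
    intro i hi
    have : 1 < Fintype.card (V i) := lt_of_le_of_ne Fintype.card_pos hi.symm
    obtain ⟨v, hv⟩ := Fintype.exists_ne_of_one_lt_card this (f i)
    exact ⟨⟨i, v⟩, fun hmem => hv (hf i v hmem), rfl⟩
  rw [isStrongResolvingSet_iff]
  simp only [Set.mem_compl_iff, not_not]
  rintro _ ⟨i, hi, rfl⟩ _ ⟨j, hj, rfl⟩ hxy
  have hij : i ≠ j := fun e => hxy (e ▸ rfl)
  refine ⟨hij, ?_⟩
  by_cases hi1 : Fintype.card (V i) = 1
  · exact .inr (hpart j fun hj1 => hij (hI ⟨hi, hi1⟩ ⟨hj, hj1⟩))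
  · exact .inl (hpart i hi1)

theorem exists_isStrongResolvingSet_card_compl_add_eq [Fintype ι] [∀ i, Fintype (V i)]
    [DecidableEq (Σ i, V i)] :
    ∃ S : Finset (Σ i, V i), #Sᶜ + (#{i | Fintype.card (V i) = 1} - 1) = Fintype.card ι ∧
      IsStrongResolvingSet (completeMultipartiteGraph V) S := by
  classical
  set P : Finset ι := {i | Fintype.card (V i) = 1}
  obtain ⟨J, hJP, hJ⟩ := exists_subset_card_eq (min_le_right 1 #P)
  let f : ∀ i, V i := fun _ => Classical.arbitrary _
  let C := (Pᶜ ∪ J).image fun i => (⟨i, f i⟩ : Σ i, V i)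
  refine ⟨Cᶜ, ?_, ?_⟩
  · have hC : #C = #(Pᶜ ∪ J) := card_image_of_injective _ fun i j e => congrArg Sigma.fst e
    have hunion : #(Pᶜ ∪ J) = #Pᶜ + #J :=
      card_union_of_disjoint (disjoint_compl_left.mono_right hJP)
    have hP : #P ≤ Fintype.card ι := card_le_univ P
    rw [compl_compl, hC, hunion, card_compl]
    omega
  · have hJ1 : ∀ i ∈ J, ∀ j ∈ J, i = j := card_le_one.mp (hJ ▸ min_le_left 1 #P)
    have hS := isStrongResolvingSet_compl_image f (I := ↑(Pᶜ ∪ J)) fun i hi j hj => by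
      simp only [Set.mem_ofPred_eq, coe_union, coe_compl, Set.mem_union, Set.mem_compl_iff,
        mem_coe] at hi hj
      exact hJ1 i (hi.1.resolve_left fun h => h (by simp [P, hi.2]))
        j (hj.1.resolve_left fun h => h (by simp [P, hj.2]))
    simpa [C] using hS

-- The truncated `- 1` vanishes when there is no singleton part, merging the two cases.
theorem sdim_eq [Fintype ι] [∀ i, Fintype (V i)] :
    sdim (completeMultipartiteGraph V) =
      Fintype.card (Σ i, V i) - Fintype.card ι + (#{i | Fintype.card (V i) = 1} - 1) := by
  classical
  have hk : Fintype.card ι ≤ Fintype.card (Σ i, V i) :=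
    Fintype.card_le_of_injective (fun i => ⟨i, Classical.arbitrary _⟩)
      fun i j e => congrArg Sigma.fst e
  refine IsLeast.csInf_eq ⟨?_, ?_⟩
  · obtain ⟨S, hS, hres⟩ := exists_isStrongResolvingSet_card_compl_add_eq (V := V)
    refine ⟨S, ?_, hres⟩
    have := S.card_add_card_compl
    omega
  · rintro _ ⟨S, rfl, hS⟩
    have := card_compl_add_le_of_isStrongResolvingSet hS
    have := S.card_add_card_compl
    omega

end SimpleGraph.completeMultipartiteGraph

theorem sdim_completeMultipartite_general (k : ℕ) (hk : 2 ≤ k) (a : Fin k → ℕ)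
    (ha : ∀ i, 1 ≤ a i) :
    sdim (completeMultipartiteGraph fun i => Fin (a i)) =
      (if (Finset.univ.filter fun i => a i = 1).card = 0
        then (∑ i, a i) - k
        else (∑ i, a i) - k + (Finset.univ.filter fun i => a i = 1).card - 1) := by
  have : Nontrivial (Fin k) := Fin.nontrivial_iff_two_le.mpr hk
  have : ∀ i, Nonempty (Fin (a i)) := fun i => ⟨⟨0, ha i⟩⟩
  rw [completeMultipartiteGraph.sdim_eq]
  simp only [Fintype.card_sigma, Fintype.card_fin]
  split_ifs <;> omega

theorem sdim_completeMultipartite (k : ℕ) (hk : 2 ≤ k) (a : Fin k → ℕ)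
    (ha : ∀ i, 1 ≤ a i) (hn : 3 ≤ ∑ i, a i) :
    sdim (completeMultipartiteGraph fun i => Fin (a i)) =
      (if (Finset.univ.filter fun i => a i = 1).card = 0
        then (∑ i, a i) - k
        else (∑ i, a i) - k + (Finset.univ.filter fun i => a i = 1).card - 1) :=
  sdim_completeMultipartite_general k hk a ha
end

section
/- For m ≥ 2, the strong resolving graph of the even cycle C_{2m} is a perfect matching mK_2: two vertices of C_{2m} are mutually maximally distant if and only if they are antipodal. -/
open SimpleGraph

variable {V : Type*} {W : Type*}

/-- The cycle graph on `n` vertices (`n ≥ 3`), as a graph on `Fin n`. -/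
def cycGraph (n : ℕ) : SimpleGraph (Fin n) where
  Adj i j := i ≠ j ∧ ((i.val + 1) % n = j.val ∨ (j.val + 1) % n = i.val)
  symm := by
    constructor
    rintro i j ⟨h, h'⟩
    exact ⟨h.symm, h'.symm⟩
  loopless := by constructor; rintro i ⟨h, -⟩; exact h rfl

/-!
The graph distance in the cycle on `Fin n` is the circular norm `min (u - v) (v - u)` of `u - v`:
it changes by at most one along an edge, and away from `v` one of the two neighbours decreases
it. Likewise, as long as `2 d(u, v) + 1 < n`, one of the two neighbours of `u` is farther from `v`,
so `u` is maximally distant from `v` exactly when `n ≤ 2 d(u, v) + 1`. Since `2 d ≤ n`, for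
`n = 2m` this says `d(u, v) = m`, a condition symmetric in `u` and `v`.
-/

namespace Fin

variable {n : ℕ}

def cycNorm (x : Fin n) : ℕ := min x.val (-x).val

variable [NeZero n]

lemma val_add_one_eq_ite (x : Fin n) : (x + 1).val = if x.val + 1 = n then 0 else x.val + 1 := by
  obtain ⟨k, rfl⟩ := Nat.exists_eq_succ_of_ne_zero (NeZero.ne n)
  rw [Fin.val_add_one]
  simp only [Fin.ext_iff, Fin.val_last]
  split_ifs <;> omega

lemma val_sub_one_eq_ite (x : Fin n) : (x - 1).val = if x.val = 0 then n - 1 else x.val - 1 := by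
  obtain ⟨k, rfl⟩ := Nat.exists_eq_succ_of_ne_zero (NeZero.ne n)
  rw [Fin.coe_sub_one]
  simp only [Fin.ext_iff, Fin.val_zero]
  split_ifs <;> omega

lemma val_neg_eq_ite (x : Fin n) : (-x).val = if x.val = 0 then 0 else n - x.val := by
  rw [Fin.val_neg]
  simp only [Fin.ext_iff, Fin.val_zero]

@[simp]
lemma cycNorm_zero : (0 : Fin n).cycNorm = 0 := by
  simp [cycNorm]

lemma two_mul_cycNorm_le (x : Fin n) : 2 * x.cycNorm ≤ n := by
  have := x.isLt
  simp only [cycNorm, val_neg_eq_ite]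
  split_ifs <;> omega

lemma cycNorm_add_one_le (x : Fin n) : (x + 1).cycNorm ≤ x.cycNorm + 1 := by
  have := x.isLt
  simp only [cycNorm, val_neg_eq_ite, val_add_one_eq_ite]
  split_ifs <;> omega

lemma cycNorm_sub_one_le (x : Fin n) : (x - 1).cycNorm ≤ x.cycNorm + 1 := by
  have := x.isLt
  simp only [cycNorm, val_neg_eq_ite, val_sub_one_eq_ite]
  split_ifs <;> omega

lemma cycNorm_sub_one_lt_or_cycNorm_add_one_lt {x : Fin n} (hx : x ≠ 0) :
    (x - 1).cycNorm < x.cycNorm ∨ (x + 1).cycNorm < x.cycNorm := by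
  have := x.isLt
  rw [Ne, Fin.ext_iff, Fin.val_zero] at hx
  simp only [cycNorm, val_neg_eq_ite, val_sub_one_eq_ite, val_add_one_eq_ite]
  split_ifs <;> omega

lemma cycNorm_lt_cycNorm_add_one_or_cycNorm_sub_one {x : Fin n} (hx : 2 * x.cycNorm + 1 < n) :
    x.cycNorm < (x + 1).cycNorm ∨ x.cycNorm < (x - 1).cycNorm := by
  have := x.isLt
  simp only [cycNorm, val_neg_eq_ite, val_sub_one_eq_ite, val_add_one_eq_ite] at hx ⊢
  split_ifs at hx ⊢ <;> first | contradiction | omega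

end Fin

namespace SimpleGraph

variable {G : SimpleGraph V} {t : V} (f : V → ℕ)

lemma exists_walk_length_le_of_descent (hdesc : ∀ u ≠ t, ∃ w, G.Adj u w ∧ f w < f u)
    (u : V) : ∃ p : G.Walk u t, p.length ≤ f u := by
  by_cases h : u = t
  · subst h
    exact ⟨.nil, Nat.zero_le _⟩
  · obtain ⟨w, hadj, hlt⟩ := hdesc u h
    obtain ⟨p, hp⟩ := exists_walk_length_le_of_descent hdesc w
    exact ⟨.cons hadj p, by rw [Walk.length_cons]; omega⟩
termination_by f u

lemma le_length_of_lipschitz (ht : f t = 0) (hlip : ∀ u w, G.Adj u w → f u ≤ f w + 1) {u : V}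
    (p : G.Walk u t) : f u ≤ p.length := by
  induction p with
  | nil => simp [ht]
  | cons hadj p ih => rw [Walk.length_cons]; exact (hlip _ _ hadj).trans (by omega)

lemma dist_eq_of_lipschitz_of_descent (ht : f t = 0) (hlip : ∀ u w, G.Adj u w → f u ≤ f w + 1)
    (hdesc : ∀ u ≠ t, ∃ w, G.Adj u w ∧ f w < f u) (u : V) : G.dist u t = f u := by
  obtain ⟨p, hp⟩ := exists_walk_length_le_of_descent f hdesc u
  obtain ⟨q, hq⟩ := (Walk.reachable p).exists_walk_length_eq_dist
  exact le_antisymm ((dist_le p).trans hp) (hq ▸ le_length_of_lipschitz f ht hlip q)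

end SimpleGraph

section cycGraph

variable {n : ℕ} [NeZero n]

lemma cycGraph_adj_iff {i j : Fin n} :
    (cycGraph n).Adj i j ↔ i ≠ j ∧ (j = i + 1 ∨ j = i - 1) := by
  have hsucc (a b : Fin n) : (a.val + 1) % n = b.val ↔ b = a + 1 := by
    rw [Fin.ext_iff, Fin.val_add, Fin.val_one', Nat.add_mod_mod, eq_comm]
  change i ≠ j ∧ ((i.val + 1) % n = j.val ∨ (j.val + 1) % n = i.val) ↔ _
  rw [hsucc, hsucc, eq_sub_iff_add_eq, eq_comm (a := i)]

lemma cycGraph_adj_of_cycNorm_ne {u w v : Fin n} (hw : w = u + 1 ∨ w = u - 1)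
    (h : (u - v).cycNorm ≠ (w - v).cycNorm) : (cycGraph n).Adj u w :=
  cycGraph_adj_iff.mpr ⟨ne_of_apply_ne (fun x => (x - v).cycNorm) h, hw⟩

lemma cycGraph_dist (u v : Fin n) : (cycGraph n).dist u v = (u - v).cycNorm := by
  refine dist_eq_of_lipschitz_of_descent (fun u => (u - v).cycNorm) (by simp) ?_ ?_ u
  · intro u w hadj
    rcases (cycGraph_adj_iff.mp hadj.symm).2 with rfl | rfl
    · simpa only [add_sub_right_comm] using Fin.cycNorm_add_one_le (w - v)
    · simpa only [sub_right_comm] using Fin.cycNorm_sub_one_le (w - v)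
  · intro u hu
    rcases Fin.cycNorm_sub_one_lt_or_cycNorm_add_one_lt (sub_ne_zero.mpr hu) with hlt | hlt
    · rw [sub_right_comm] at hlt
      exact ⟨u - 1, cycGraph_adj_of_cycNorm_ne (.inr rfl) hlt.ne', hlt⟩
    · rw [← add_sub_right_comm] at hlt
      exact ⟨u + 1, cycGraph_adj_of_cycNorm_ne (.inl rfl) hlt.ne', hlt⟩

lemma two_mul_cycGraph_dist_le (u v : Fin n) : 2 * (cycGraph n).dist u v ≤ n :=
  cycGraph_dist u v ▸ (u - v).two_mul_cycNorm_le

lemma cycGraph_maxDistFrom_iff {u v : Fin n} :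
    MaxDistFrom (cycGraph n) u v ↔ n ≤ 2 * (cycGraph n).dist u v + 1 := by
  refine ⟨fun hmax => ?_, fun h w _ => by have := two_mul_cycGraph_dist_le w v; omega⟩
  by_contra! hlt
  simp only [MaxDistFrom, cycGraph_dist] at hmax hlt
  rcases Fin.cycNorm_lt_cycNorm_add_one_or_cycNorm_sub_one hlt with hgt | hgt
  · rw [← add_sub_right_comm] at hgt
    exact (hmax _ (cycGraph_adj_of_cycNorm_ne (.inl rfl) hgt.ne)).not_gt hgt
  · rw [sub_right_comm] at hgt
    exact (hmax _ (cycGraph_adj_of_cycNorm_ne (.inr rfl) hgt.ne)).not_gt hgt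

end cycGraph

theorem srGraph_even_cycle (m : ℕ) (hm : 2 ≤ m) :
    ∀ u v : Fin (2 * m), (srGraph (cycGraph (2 * m))).Adj u v ↔
      (cycGraph (2 * m)).dist u v = m := by
  have : NeZero (2 * m) := ⟨by omega⟩
  intro u v
  have hle := two_mul_cycGraph_dist_le u v
  change u ≠ v ∧ MutMaxDist _ u v ↔ _
  rw [MutMaxDist, cycGraph_maxDistFrom_iff, cycGraph_maxDistFrom_iff, dist_comm (u := v)]
  constructor
  · rintro ⟨-, h, -⟩
    omega
  · intro h
    refine ⟨?_, by omega, by omega⟩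
    rintro rfl
    rw [dist_self] at h
    omega
end

section
/- If G and H are connected graphs each of order at least two, then the strong resolving graph of the Cartesian product satisfies (G □ H)_SR = G_SR × H_SR, the direct (tensor) product of the strong resolving graphs. -/
open SimpleGraph

variable {V : Type*} {W : Type*}

/-- The direct (tensor) product of two graphs. -/
def directProd (G : SimpleGraph V) (H : SimpleGraph W) : SimpleGraph (V × W) where
  Adj x y := G.Adj x.1 y.1 ∧ H.Adj x.2 y.2
  symm := by constructor; rintro x y ⟨h1, h2⟩; exact ⟨h1.symm, h2.symm⟩
  loopless := by constructor; rintro x ⟨h1, -⟩; exact G.loopless.irrefl _ h1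

/-! Distances in `G □ H` add coordinatewise and a neighbour of `(a, b)` moves exactly one
coordinate, so `(a, b)` is maximally distant from `(c, d)` iff `a` is from `c` and `b` is from `d`.
In a connected graph with at least two vertices no vertex is maximally distant from itself,
so mutually maximally distant pairs are automatically distinct on both sides. -/

section

variable {G : SimpleGraph V} {H : SimpleGraph W}

lemma dist_boxProd_of_reachable {x y : V × W} (hG : G.Reachable x.1 y.1)
    (hH : H.Reachable x.2 y.2) :
    (G □ H).dist x y = G.dist x.1 y.1 + H.dist x.2 y.2 := by
  have hGH : (G □ H).Reachable x y := reachable_boxProd.mpr ⟨hG, hH⟩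
  apply Nat.cast_injective (R := ℕ∞)
  rw [Nat.cast_add, hGH.coe_dist_eq_edist, hG.coe_dist_eq_edist, hH.coe_dist_eq_edist,
    edist_boxProd]

lemma maxDistFrom_boxProd_iff (hG : G.Connected) (hH : H.Connected) {a c : V} {b d : W} :
    MaxDistFrom (G □ H) (a, b) (c, d) ↔ MaxDistFrom G a c ∧ MaxDistFrom H b d := by
  have hdist (x y : V × W) := dist_boxProd_of_reachable (hG x.1 y.1) (hH x.2 y.2)
  constructor
  · intro h
    refine ⟨fun w hw ↦ ?_, fun w hw ↦ ?_⟩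
    · have := h (w, b) (boxProd_adj_left.mpr hw)
      rw [hdist, hdist] at this
      exact Nat.le_of_add_le_add_right this
    · have := h (a, w) (boxProd_adj_right.mpr hw)
      rw [hdist, hdist] at this
      exact Nat.le_of_add_le_add_left this
  · rintro ⟨hac, hbd⟩ ⟨w₁, w₂⟩ hw
    rw [hdist, hdist]
    rcases boxProd_adj.mp hw with ⟨hadj, rfl : b = w₂⟩ | ⟨hadj, rfl : a = w₁⟩
    · exact Nat.add_le_add_right (hac w₁ hadj) _
    · exact Nat.add_le_add_left (hbd w₂ hadj) _

lemma mutMaxDist_boxProd_iff (hG : G.Connected) (hH : H.Connected) {a c : V} {b d : W} :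
    MutMaxDist (G □ H) (a, b) (c, d) ↔ MutMaxDist G a c ∧ MutMaxDist H b d := by
  simp only [MutMaxDist, maxDistFrom_boxProd_iff hG hH]
  tauto

lemma not_maxDistFrom_self_of_adj {a w : V} (h : G.Adj a w) : ¬MaxDistFrom G a a := by
  intro hmax
  have hwa : G.dist w a = 0 := by simpa using hmax w h
  exact h.ne ((h.reachable.symm.dist_eq_zero_iff.mp hwa).symm)

lemma srGraph_adj_iff [Nontrivial V] (hG : G.Preconnected) {u v : V} :
    (srGraph G).Adj u v ↔ MutMaxDist G u v := by
  refine ⟨And.right, fun h ↦ ⟨?_, h⟩⟩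
  rintro rfl
  obtain ⟨w, hw⟩ := hG.exists_adj_of_nontrivial u
  exact not_maxDistFrom_self_of_adj hw h.1

end

theorem srGraph_boxProd [Fintype V] [Fintype W] (G : SimpleGraph V)
    (H : SimpleGraph W) (hG : G.Connected) (hH : H.Connected)
    (hV : 2 ≤ Fintype.card V) (hW : 2 ≤ Fintype.card W) :
    srGraph (G □ H) = directProd (srGraph G) (srGraph H) := by
  have : Nontrivial V := Fintype.one_lt_card_iff_nontrivial.mp hV
  have : Nontrivial W := Fintype.one_lt_card_iff_nontrivial.mp hW
  ext ⟨a, b⟩ ⟨c, d⟩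
  rw [srGraph_adj_iff (hG.boxProd hH).preconnected, mutMaxDist_boxProd_iff hG hH]
  exact (and_congr (srGraph_adj_iff hG.preconnected) (srGraph_adj_iff hH.preconnected)).symm
end

section
/- The modular product G ⋄ H of two graphs of order at least two contains no pair of distinct non-adjacent twins. -/
open SimpleGraph

variable {V : Type*} {W : Type*}

/-- The modular product of two graphs:
`E(G ⋄ H) = E(G □ H) ∪ E(G × H) ∪ E(Ḡ × H̄)`. -/
def modProd (G : SimpleGraph V) (H : SimpleGraph W) : SimpleGraph (V × W) :=
  (G □ H) ⊔ directProd G H ⊔ directProd Gᶜ Hᶜ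

/-!
Off the two layers through `(a, b)`, the vertices `(a, b)` and `(c, d)` are adjacent in `G ⋄ H`
exactly when `G.Adj a c ↔ H.Adj b d`. So if `(a, b)` and `(c, d)` are distinct and non-adjacent,
a third vertex is adjacent to exactly one of them: `(c, b)` when `a ≠ c` and `b ≠ d`, and
`(a', b)` for any `a' ≠ a` when `a = c` (symmetrically when `b = d`).
-/

section

variable {G : SimpleGraph V} {H : SimpleGraph W}

lemma modProd_adj_left {a c : V} {b : W} : (modProd G H).Adj (a, b) (c, b) ↔ G.Adj a c := by
  simp [modProd, directProd]

lemma modProd_adj_right {a : V} {b d : W} : (modProd G H).Adj (a, b) (a, d) ↔ H.Adj b d := by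
  simp [modProd, directProd]

lemma modProd_adj_of_ne_of_ne {a c : V} {b d : W} (hac : a ≠ c) (hbd : b ≠ d) :
    (modProd G H).Adj (a, b) (c, d) ↔ (G.Adj a c ↔ H.Adj b d) := by
  simp only [modProd, directProd, sup_adj, boxProd_adj, compl_adj]
  tauto

theorem modProd_neighborSet_ne_of_not_adj [Nontrivial V] [Nontrivial W] {x y : V × W}
    (hne : x ≠ y) (hxy : ¬ (modProd G H).Adj x y) :
    (modProd G H).neighborSet x ≠ (modProd G H).neighborSet y := by
  obtain ⟨a, b⟩ := x
  obtain ⟨c, d⟩ := y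
  suffices ∃ z, ¬ ((modProd G H).Adj (a, b) z ↔ (modProd G H).Adj (c, d) z) by
    obtain ⟨z, hz⟩ := this
    exact fun h => hz (by rw [← mem_neighborSet, h, mem_neighborSet])
  obtain rfl | hac := eq_or_ne a c
  · have hbd : b ≠ d := fun h => hne (by rw [h])
    have hdb : ¬ H.Adj d b := fun h => hxy (modProd_adj_right.mpr h.symm)
    obtain ⟨a', ha'⟩ := exists_ne a
    refine ⟨(a', b), ?_⟩
    rw [modProd_adj_left, modProd_adj_of_ne_of_ne ha'.symm hbd.symm]
    tauto
  obtain rfl | hbd := eq_or_ne b d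
  · have hca : ¬ G.Adj c a := fun h => hxy (modProd_adj_left.mpr h.symm)
    obtain ⟨b', hb'⟩ := exists_ne b
    refine ⟨(a, b'), ?_⟩
    rw [modProd_adj_right, modProd_adj_of_ne_of_ne hac.symm hb'.symm]
    tauto
  · refine ⟨(c, b), ?_⟩
    rw [modProd_adj_of_ne_of_ne hac hbd, H.adj_comm] at hxy
    rw [modProd_adj_left, modProd_adj_right]
    exact hxy

end

theorem modProd_no_nonadjacent_twins [Fintype V] [Fintype W]
    (G : SimpleGraph V) (H : SimpleGraph W)
    (hV : 2 ≤ Fintype.card V) (hW : 2 ≤ Fintype.card W) :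
    ∀ x y : V × W, x ≠ y → ¬ (modProd G H).Adj x y →
      (modProd G H).neighborSet x ≠ (modProd G H).neighborSet y := by
  have : Nontrivial V := Fintype.one_lt_card_iff_nontrivial.mp hV
  have : Nontrivial W := Fintype.one_lt_card_iff_nontrivial.mp hW
  exact fun _ _ => modProd_neighborSet_ne_of_not_adj
end

section
/- For graphs G and H of order at least two, two vertices (g,h) and (g',h') of the modular product G ⋄ H are distinct adjacent twins if and only if either (i) N_G[g] = N_G[g'] and N_H[h] = N_H[h'] with (g,h) ≠ (g',h'), or (ii) {g,g'} is a γ_G-pair and {h,h'} is a γ_H-pair. -/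
/-!
In `G ⋄ H` a vertex `(a, b)` is equal or adjacent to `(g, h)` exactly when
`a ∈ N[g] ↔ b ∈ N[h]`. So `N[(g, h)] = N[(g', h')]` says that membership in the symmetric
differences `N[g] ∆ N[g']` and `N[h] ∆ N[h']` is the same for every `a` and `b`: both are
empty or both are everything. The first case is `N[g] = N[g'] ∧ N[h] = N[h']`; the second is
`N[g] = N[g']ᶜ ∧ N[h] = N[h']ᶜ`, i.e. two `γ`-pairs. Distinct vertices with equal closed
neighbourhoods are automatically adjacent.
-/

open SimpleGraph

variable {V : Type*} {W : Type*}

/-- The closed neighborhood of a vertex. -/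
def closedNbr (G : SimpleGraph V) (v : V) : Set V :=
  insert v (G.neighborSet v)

/-- `{u, w}` is a `γ`-pair of `G`: their closed neighborhoods are disjoint and
cover all of `G`. -/
def GammaPair (G : SimpleGraph V) (u w : V) : Prop :=
  closedNbr G u ∩ closedNbr G w = ∅ ∧ closedNbr G u ∪ closedNbr G w = Set.univ

lemma mem_closedNbr {G : SimpleGraph V} {v a : V} :
    a ∈ closedNbr G v ↔ a = v ∨ G.Adj v a := by
  simp [closedNbr]

lemma self_mem_closedNbr (G : SimpleGraph V) (v : V) : v ∈ closedNbr G v :=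
  Set.mem_insert v _

lemma adj_of_ne_of_closedNbr_eq {G : SimpleGraph V} {x y : V} (hne : x ≠ y)
    (h : closedNbr G x = closedNbr G y) : G.Adj x y := by
  have hy : y ∈ closedNbr G x := h ▸ self_mem_closedNbr G y
  exact (mem_closedNbr.mp hy).resolve_left hne.symm

lemma adj_and_closedNbr_eq_iff {G : SimpleGraph V} {x y : V} :
    G.Adj x y ∧ closedNbr G x = closedNbr G y ↔ x ≠ y ∧ closedNbr G x = closedNbr G y :=
  ⟨fun ⟨hadj, h⟩ ↦ ⟨hadj.ne, h⟩, fun ⟨hne, h⟩ ↦ ⟨adj_of_ne_of_closedNbr_eq hne h, h⟩⟩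

lemma gammaPair_iff {G : SimpleGraph V} {u w : V} :
    GammaPair G u w ↔ closedNbr G u = (closedNbr G w)ᶜ := by
  rw [GammaPair, eq_compl_iff_isCompl, isCompl_iff, Set.disjoint_iff_inter_eq_empty,
    codisjoint_iff]
  rfl

lemma ne_of_closedNbr_eq_compl {G : SimpleGraph V} {u w : V}
    (h : closedNbr G u = (closedNbr G w)ᶜ) : u ≠ w := by
  rintro rfl
  exact (Set.ext_iff.mp h u).mp (self_mem_closedNbr G u) (self_mem_closedNbr G u)

lemma closedNbr_modProd (G : SimpleGraph V) (H : SimpleGraph W) (g : V) (h : W) :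
    closedNbr (modProd G H) (g, h) = {p | p.1 ∈ closedNbr G g ↔ p.2 ∈ closedNbr H h} := by
  ext ⟨a, b⟩
  simp only [Set.mem_ofPred_eq, mem_closedNbr, Prod.mk.injEq, modProd, sup_adj, boxProd_adj,
    directProd, compl_adj]
  grind

lemma eq_empty_or_univ_of_forall_mem_iff_mem {α β : Type*} [Nonempty α] [Nonempty β]
    {S : Set α} {T : Set β} (h : ∀ a b, a ∈ S ↔ b ∈ T) :
    (S = ∅ ∧ T = ∅) ∨ (S = Set.univ ∧ T = Set.univ) := by
  obtain ⟨a⟩ := ‹Nonempty α›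
  obtain ⟨b⟩ := ‹Nonempty β›
  by_cases ha : a ∈ S
  · right
    exact ⟨Set.eq_univ_of_forall fun a' ↦ (h a' b).mpr ((h a b).mp ha),
      Set.eq_univ_of_forall fun b' ↦ (h a b').mp ha⟩
  · left
    exact ⟨Set.eq_empty_of_forall_notMem fun a' ha' ↦ ha ((h a b).mpr ((h a' b).mp ha')),
      Set.eq_empty_of_forall_notMem fun b' hb' ↦ ha ((h a b').mpr hb')⟩

theorem setOf_mem_iff_mem_eq_iff {α β : Type*} [Nonempty α] [Nonempty β]
    {A A' : Set α} {B B' : Set β} :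
    {p : α × β | p.1 ∈ A ↔ p.2 ∈ B} = {p | p.1 ∈ A' ↔ p.2 ∈ B'} ↔
      (A = A' ∧ B = B') ∨ (A = A'ᶜ ∧ B = B'ᶜ) := by
  have key : {p : α × β | p.1 ∈ A ↔ p.2 ∈ B} = {p | p.1 ∈ A' ↔ p.2 ∈ B'} ↔
      ∀ a b, a ∈ symmDiff A A' ↔ b ∈ symmDiff B B' := by
    simp only [Set.ext_iff, Set.mem_ofPred_eq, Set.mem_symmDiff, Prod.forall]
    exact forall₂_congr fun a b ↦ by tauto
  rw [key, eq_compl_iff_isCompl, eq_compl_iff_isCompl, ← symmDiff_eq_bot (a := A),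
    ← symmDiff_eq_bot (a := B), ← symmDiff_eq_top (a := A), ← symmDiff_eq_top (a := B),
    Set.bot_eq_empty, Set.top_eq_univ]
  refine ⟨eq_empty_or_univ_of_forall_mem_iff_mem, ?_⟩
  rintro (⟨hA, hB⟩ | ⟨hA, hB⟩) a b <;> simp [hA, hB]

theorem modProd_adjacent_twins_iff_general
    (G : SimpleGraph V) (H : SimpleGraph W) :
    ∀ (g g' : V) (h h' : W),
      ((modProd G H).Adj (g, h) (g', h') ∧
        closedNbr (modProd G H) (g, h) = closedNbr (modProd G H) (g', h')) ↔
      ((closedNbr G g = closedNbr G g' ∧ closedNbr H h = closedNbr H h' ∧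
          (g, h) ≠ (g', h')) ∨
        (GammaPair G g g' ∧ GammaPair H h h')) := by
  intro g g' h h'
  have : Nonempty V := ⟨g⟩
  have : Nonempty W := ⟨h⟩
  rw [adj_and_closedNbr_eq_iff, closedNbr_modProd, closedNbr_modProd, setOf_mem_iff_mem_eq_iff,
    gammaPair_iff, gammaPair_iff]
  constructor
  · rintro ⟨hne, ⟨hG, hH⟩ | hcompl⟩
    · exact Or.inl ⟨hG, hH, hne⟩
    · exact Or.inr hcompl
  · rintro (⟨hG, hH, hne⟩ | ⟨hG, hH⟩)
    · exact ⟨hne, Or.inl ⟨hG, hH⟩⟩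
    · exact ⟨fun heq ↦ ne_of_closedNbr_eq_compl hG (congrArg Prod.fst heq), Or.inr ⟨hG, hH⟩⟩

theorem modProd_adjacent_twins_iff [Fintype V] [Fintype W]
    (G : SimpleGraph V) (H : SimpleGraph W)
    (hV : 2 ≤ Fintype.card V) (hW : 2 ≤ Fintype.card W) :
    ∀ (g g' : V) (h h' : W),
      ((modProd G H).Adj (g, h) (g', h') ∧
        closedNbr (modProd G H) (g, h) = closedNbr (modProd G H) (g', h')) ↔
      ((closedNbr G g = closedNbr G g' ∧ closedNbr H h = closedNbr H h' ∧
          (g, h) ≠ (g', h')) ∨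
        (GammaPair G g g' ∧ GammaPair H h h')) :=
  modProd_adjacent_twins_iff_general G H
end
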